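/- Let a and n be integers with a ≥ 5, a ≡ 1 (mod 4), n ≥ 3, n ≡ 3 (mod 4), and a(n−2) ≥ 6n−1. Then the Frobenius number of the triple {S_{a,n}, S_{a,n+1}, S_{a,n+2}} equals (3n−2)·S_{a,n+1} + ((a(n−2)+2n−3)/4)·S_{a,n+2} − S_{a,n}. -/

import Mathlib

/-- The 2-step star number `S_{a,n} = a·n·(n−2) + 1`. -/
def twoStepStar (a n : ℕ) : ℕ := a * n * (n - 2) + 1

/-!
Write `A, B, C` for the three star numbers. Modulo `A` we have `B ≡ a(2n−1)` and `C ≡ 4an`, and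
`a` is invertible, so the pairs `(x, y)` with `A ∣ xB + yC` form the lattice spanned by
`(3n−1, t)` and `(−(n+1), s)`, where `s = (a(n−2)+2n+1)/4` and `t = s − (2n−1)`: these are integers
by the congruence conditions, and `t ≥ 1` by the size condition. The L-shaped region
`[0, 3n−1) × [0, s) ∪ [3n−1, 4n) × [0, t)`, of area `A`, meets every coset of this lattice exactly
once, and comparing the weights of the lattice vectors shows that each `xB + yC` with `(x, y)` in
the L is the least element of the semigroup in its residue class. The Frobenius number is the
largest of these, attained at the corner `(3n−2, s−1)`, minus `A`.
-/

open Finset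

/-- `W` is the largest element of the Apéry set of the semigroup with respect to `A`. -/
theorem frobeniusNumber_sub_of_forall_modEq {s : Set ℕ} {A W : ℕ} (hA : A ∈ s) (hA0 : 0 < A)
    (hAW : A ≤ W) (hcover : ∀ N, ∃ w ∈ AddSubmonoid.closure s, w ≤ W ∧ w ≡ N [MOD A])
    (hmin : ∀ w ∈ AddSubmonoid.closure s, w ≡ W [MOD A] → W ≤ w) :
    FrobeniusNumber (W - A) s := by
  refine frobeniusNumber_iff.2 ⟨fun h ↦ ?_, fun N hN ↦ ?_⟩
  · have := hmin _ h ((Nat.modEq_iff_dvd' (Nat.sub_le W A)).2 ⟨1, by omega⟩)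
    omega
  · obtain ⟨w, hw, hwW, hwN⟩ := hcover N
    have hwN' : w ≤ N := hwN.le_of_lt_add (by omega)
    obtain ⟨e, he⟩ := (Nat.modEq_iff_dvd' hwN').1 hwN
    have hN : N = w + e • A := by rw [smul_eq_mul, mul_comm]; omega
    exact hN ▸ add_mem hw (nsmul_mem (AddSubmonoid.subset_closure hA) e)

lemma mem_closure_triple {A B C w : ℕ} :
    w ∈ AddSubmonoid.closure ({A, B, C} : Set ℕ) ↔ ∃ i j l : ℕ, i * A + j * B + l * C = w := by
  rw [← Set.singleton_union, AddSubmonoid.closure_union, AddSubmonoid.mem_sup]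
  simp_rw [AddSubmonoid.mem_closure_singleton, AddSubmonoid.mem_closure_pair]
  simp [add_assoc]

def lShape (p q s t : ℕ) : Finset (ℕ × ℕ) := range p ×ˢ range s ∪ Ico p (p + q) ×ˢ range t

lemma mem_lShape {p q s t x y : ℕ} :
    (x, y) ∈ lShape p q s t ↔ x < p ∧ y < s ∨ p ≤ x ∧ x < p + q ∧ y < t := by
  simp [lShape, and_assoc]

lemma card_lShape (p q s t : ℕ) : #(lShape p q s t) = p * s + q * t := by
  rw [lShape, card_union_of_disjoint, card_product, card_product, card_range, card_range,
    card_range, Nat.card_Ico, Nat.add_sub_cancel_left]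
  simp only [disjoint_left, mem_product, mem_range, mem_Ico]
  omega

lemma succ_mul_add_succ_mul_le_of_mem_lShape {p q s t x y B C : ℕ} (hqt : q * B + t * C ≤ s * C)
    (h : (x, y) ∈ lShape p q s t) : (x + 1) * B + (y + 1) * C ≤ p * B + s * C := by
  rcases mem_lShape.1 h with ⟨hx, hy⟩ | ⟨-, hx, hy⟩
  · gcongr ?_ * B + ?_ * C <;> omega
  · calc (x + 1) * B + (y + 1) * C ≤ (p + q) * B + t * C := by gcongr ?_ * B + ?_ * C <;> omega
      _ ≤ p * B + s * C := by rw [add_mul, add_assoc]; gcongr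

lemma eq_of_mem_lShape_of_sub_eq {p q s t x y x' y' : ℕ} (ht : 0 < t) (hts : t ≤ s)
    (h : (x, y) ∈ lShape p q s t) (h' : (x', y') ∈ lShape p q s t) {α β : ℤ}
    (hx : (x' : ℤ) - x = α * p - β * q) (hy : (y' : ℤ) - y = α * t + β * s) :
    x = x' ∧ y = y' := by
  suffices α = 0 ∧ β = 0 by
    obtain ⟨rfl, rfl⟩ := this
    omega
  rw [mem_lShape] at h h'
  have hdx : -(p + q : ℤ) < α * p - β * q ∧ α * p - β * q < p + q := by omega
  have hdy : -(s : ℤ) < α * t + β * s ∧ α * t + β * s < s := by omega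
  have hright : (p : ℤ) ≤ α * p - β * q → α * t + β * s < t := by omega
  have hleft : α * p - β * q ≤ -p → -(t : ℤ) < α * t + β * s := by omega
  have hp : (0 : ℤ) ≤ p := by positivity
  have hq : (0 : ℤ) ≤ q := by positivity
  have ht' : (0 : ℤ) < t := by exact_mod_cast ht
  -- for `β = 0` the bounding box does not suffice: a shift by `α • (p, t)` leaves the L via its notch
  obtain hα | rfl | hα := lt_trichotomy α 0 <;> obtain hβ | rfl | hβ := lt_trichotomy β 0
  · nlinarith
  · nlinarith [hleft (by nlinarith)]
  · nlinarith
  · nlinarith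
  · simp
  · nlinarith
  · nlinarith
  · nlinarith [hright (by nlinarith)]
  · nlinarith

lemma le_succ_mul_add_succ_mul_of_sub_eq {p q s t x y B C : ℕ} (ht : 0 < t) (hts : t ≤ s)
    (hqs : q * B ≤ s * C) (hst : s * C ≤ t * C + (p + q) * B) {α β : ℤ}
    (hx : (x : ℤ) + 1 - p = α * p - β * q) (hy : (y : ℤ) + 1 - s = α * t + β * s) :
    p * B + s * C ≤ (x + 1) * B + (y + 1) * C := by
  zify at hqs hst ⊢
  have hU : (0 : ℤ) ≤ p * B + t * C := by positivity
  have hV : (0 : ℤ) ≤ s * C - q * B := by linarith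
  have hUV : (0 : ℤ) ≤ (p * B + t * C) - (s * C - q * B) := by linarith
  have key : ((x + 1) * B + (y + 1) * C : ℤ) - (p * B + s * C) =
      α * (p * B + t * C) + β * (s * C - q * B) := by
    linear_combination (B : ℤ) * hx + (C : ℤ) * hy
  have hp : (0 : ℤ) ≤ p := by positivity
  have hq : (0 : ℤ) ≤ q := by positivity
  have hx0 : (0 : ℤ) ≤ x := by positivity
  have hy0 : (0 : ℤ) ≤ y := by positivity
  have ht' : (0 : ℤ) < t := by exact_mod_cast ht
  have hts' : (t : ℤ) ≤ s := by exact_mod_cast hts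
  have hα : 0 ≤ α := by
    by_contra! hα
    have hβ : β < 0 := by nlinarith
    nlinarith
  obtain hβ | hβ := le_or_gt 0 β
  · nlinarith [mul_nonneg hα hU, mul_nonneg hβ hV]
  · have hαβ : 0 ≤ α + β := by nlinarith
    nlinarith [mul_nonneg hαβ hU, mul_nonneg (neg_nonneg.2 hβ.le) hUV]

theorem frobeniusNumber_of_lShape {A B C p q s t : ℕ} (hp : 0 < p) (ht : 0 < t) (hts : t ≤ s)
    (hA : p * s + q * t = A)
    (hlat : ∀ x y : ℤ, (A : ℤ) ∣ x * B + y * C →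
      ∃ α β : ℤ, x = α * p - β * q ∧ y = α * t + β * s)
    (hqt : q * B + t * C ≤ s * C) (hst : s * C ≤ t * C + (p + q) * B)
    (hAW : A ≤ (p - 1) * B + (s - 1) * C) :
    FrobeniusNumber ((p - 1) * B + (s - 1) * C - A) {A, B, C} := by
  have hA0 : 0 < A := by rw [← hA]; nlinarith
  have hW : (p - 1) * B + (s - 1) * C + B + C = p * B + s * C := by
    obtain ⟨p, rfl⟩ := Nat.exists_eq_add_one_of_ne_zero hp.ne'
    obtain ⟨s, rfl⟩ := Nat.exists_eq_add_one_of_ne_zero (ht.trans_le hts).ne'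
    simp only [Nat.add_sub_cancel]; ring
  have hsub : ∀ x y x' y' : ℕ, x * B + y * C ≡ x' * B + y' * C [MOD A] →
      ∃ α β : ℤ, (x' : ℤ) - x = α * p - β * q ∧ (y' : ℤ) - y = α * t + β * s := by
    intro x y x' y' h
    refine hlat _ _ ?_
    have hdvd := Nat.modEq_iff_dvd.1 h
    push_cast at hdvd
    convert hdvd using 1
    ring
  have hinj : Set.InjOn (fun xy : ℕ × ℕ ↦ (xy.1 * B + xy.2 * C) % A) (lShape p q s t) := by
    rintro ⟨x, y⟩ h ⟨x', y'⟩ h' hxy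
    obtain ⟨α, β, hx, hy⟩ := hsub x y x' y' hxy
    obtain ⟨rfl, rfl⟩ := eq_of_mem_lShape_of_sub_eq ht hts h h' hx hy
    rfl
  refine frobeniusNumber_sub_of_forall_modEq (by simp) hA0 hAW (fun N ↦ ?_) (fun w hw hwW ↦ ?_)
  · obtain ⟨⟨x, y⟩, h, hxy⟩ := surjOn_of_injOn_of_card_le _
      (fun _ _ ↦ Finset.mem_range.2 (Nat.mod_lt _ hA0)) hinj (by simp [card_lShape, hA])
      (Finset.mem_range.2 (Nat.mod_lt N hA0))
    refine ⟨x * B + y * C, mem_closure_triple.2 ⟨0, x, y, by ring⟩, ?_, hxy⟩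
    have := succ_mul_add_succ_mul_le_of_mem_lShape hqt h
    linarith
  · obtain ⟨i, j, l, rfl⟩ := mem_closure_triple.1 hw
    have hjl : j * B + l * C ≡ (p - 1) * B + (s - 1) * C [MOD A] := by
      unfold Nat.ModEq at hwW ⊢
      rwa [add_assoc, Nat.mul_add_mod'] at hwW
    obtain ⟨α, β, hx, hy⟩ := hsub _ _ _ _ hjl.symm
    have hx' : (j : ℤ) + 1 - p = α * p - β * q := by omega
    have hy' : (l : ℤ) + 1 - s = α * t + β * s := by omega
    have := le_succ_mul_add_succ_mul_of_sub_eq ht hts (by omega) hst hx' hy'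
    nlinarith

lemma exists_eq_of_dvd_mul_add_mul {e f q s A x y : ℤ} (hef : IsCoprime e f) (hf : f ≠ 0)
    (hA : f * s - e * q = A) (h : A ∣ x * e + y * f) :
    ∃ γ c : ℤ, x = γ * f - c * q ∧ y = c * s - γ * e := by
  obtain ⟨c, hc⟩ := h
  obtain ⟨γ, hγ⟩ : f ∣ x + c * q :=
    hef.symm.dvd_of_dvd_mul_right ⟨c * s - y, by linear_combination hc - c * hA⟩
  refine ⟨γ, c, by linear_combination hγ, mul_left_cancel₀ hf ?_⟩
  linear_combination -e * hγ + hc - c * hA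

lemma twoStepStar_add_two (a r : ℕ) : twoStepStar a (r + 2) = a * (r + 2) * r + 1 := by
  simp [twoStepStar]

lemma twoStepStar_add_three (a r : ℕ) :
    twoStepStar a (r + 3) = twoStepStar a (r + 2) + a * (2 * r + 3) := by
  simp [twoStepStar]; ring

lemma twoStepStar_add_four (a r : ℕ) :
    twoStepStar a (r + 4) = twoStepStar a (r + 2) + a * (4 * r + 8) := by
  simp [twoStepStar]; ring

lemma exists_eq_of_twoStepStar_dvd {a r t : ℕ} (hart : 4 * t + 6 * r + 7 = a * r) (x y : ℤ)
    (h : (twoStepStar a (r + 2) : ℤ) ∣ x * twoStepStar a (r + 3) + y * twoStepStar a (r + 4)) :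
    ∃ α β : ℤ, x = α * (3 * r + 5) - β * (r + 3) ∧ y = α * t + β * (t + 2 * r + 3) := by
  have hcop : IsCoprime (twoStepStar a (r + 2) : ℤ) a :=
    ⟨1, -((r + 2) * r), by rw [twoStepStar_add_two]; push_cast; ring⟩
  have hdvd : (twoStepStar a (r + 2) : ℤ) ∣ a * (x * (2 * r + 3) + y * (4 * r + 8)) := by
    refine (dvd_sub h (dvd_mul_left _ (x + y))).trans (dvd_of_eq ?_)
    rw [twoStepStar_add_three, twoStepStar_add_four]
    push_cast
    ring
  have hartZ : (4 * t + 6 * r + 7 : ℤ) = a * r := by exact_mod_cast hart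
  obtain ⟨γ, c, hx, hy⟩ := exists_eq_of_dvd_mul_add_mul (q := r + 3) (s := t + 2 * r + 3)
    ⟨-(2 * r + 5), r + 2, by ring⟩ (by positivity)
    (by rw [twoStepStar_add_two]; push_cast; linear_combination (r + 2 : ℤ) * hartZ)
    (hcop.dvd_of_dvd_mul_left hdvd)
  exact ⟨γ, c - γ, by linear_combination hx, by linear_combination hy⟩

lemma twoStepStar_add_two_le (a r t : ℕ) : twoStepStar a (r + 2) ≤
    (3 * r + 4) * twoStepStar a (r + 3) + (t + 2 * r + 2) * twoStepStar a (r + 4) := by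
  calc twoStepStar a (r + 2) ≤ twoStepStar a (r + 4) := by rw [twoStepStar_add_four]; omega
    _ ≤ (t + 2 * r + 2) * twoStepStar a (r + 4) := Nat.le_mul_of_pos_left _ (by omega)
    _ ≤ _ := Nat.le_add_left _ _

theorem frobeniusNumber_twoStepStar {a r t : ℕ} (ht : 0 < t) (hart : 4 * t + 6 * r + 7 = a * r) :
    FrobeniusNumber ((3 * r + 4) * twoStepStar a (r + 3) + (t + 2 * r + 2) * twoStepStar a (r + 4)
      - twoStepStar a (r + 2))
      {twoStepStar a (r + 2), twoStepStar a (r + 3), twoStepStar a (r + 4)} := by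
  have hB := twoStepStar_add_three a r
  have hC := twoStepStar_add_four a r
  have hlat := exists_eq_of_twoStepStar_dvd hart
  have := frobeniusNumber_of_lShape (p := 3 * r + 5) (q := r + 3) (s := t + 2 * r + 3) (by omega) ht
    (by omega) ?_ (by push_cast; exact hlat) (by rw [hB, hC]; nlinarith) (by rw [hB, hC]; nlinarith)
    (by simpa using twoStepStar_add_two_le a r t)
  · simpa using this
  · rw [twoStepStar_add_two]
    nlinarith

theorem frobenius_twoStepStar_one_three_general (a n : ℕ) (ha4 : a % 4 = 1) (hn : 3 ≤ n) (hn4 : n % 4 = 3) (hbig : 6 * n - 1 ≤ a * (n - 2)) :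
    ∃ g : ℕ,
      FrobeniusNumber g
        {twoStepStar a n, twoStepStar a (n + 1), twoStepStar a (n + 2)} ∧
      (g : ℚ) = (3 * (n : ℚ) - 2) * twoStepStar a (n + 1) + (((a : ℚ) * ((n : ℚ) - 2) + 2 * (n : ℚ) - 3) / 4) * twoStepStar a (n + 2) - twoStepStar a n := by
  obtain ⟨r, rfl⟩ : ∃ r, n = r + 2 := ⟨n - 2, by omega⟩
  rw [Nat.add_sub_cancel] at hbig
  have har : a * r % 4 = 1 := by rw [Nat.mul_mod, ha4, show r % 4 = 1 by omega]
  obtain ⟨t, hart⟩ : ∃ t, 4 * t + 6 * r + 7 = a * r := ⟨(a * r - 6 * r - 7) / 4, by omega⟩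
  refine ⟨_, frobeniusNumber_twoStepStar (by omega) hart, ?_⟩
  have hartQ : (4 * t + 6 * r + 7 : ℚ) = a * r := by exact_mod_cast hart
  rw [Nat.cast_sub (twoStepStar_add_two_le a r t)]
  push_cast
  linear_combination (twoStepStar a (r + 4) / 4 : ℚ) * hartQ

theorem frobenius_twoStepStar_one_three (a n : ℕ) (ha : 5 ≤ a) (ha4 : a % 4 = 1) (hn : 3 ≤ n) (hn4 : n % 4 = 3) (hbig : 6 * n - 1 ≤ a * (n - 2)) :
    ∃ g : ℕ,
      FrobeniusNumber g
        {twoStepStar a n, twoStepStar a (n + 1), twoStepStar a (n + 2)} ∧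
      (g : ℚ) = (3 * (n : ℚ) - 2) * twoStepStar a (n + 1) + (((a : ℚ) * ((n : ℚ) - 2) + 2 * (n : ℚ) - 3) / 4) * twoStepStar a (n + 2) - twoStepStar a n :=
  frobenius_twoStepStar_one_three_general a n ha4 hn hn4 hbig
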